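/- Let k be a field and A a unital associative k-algebra. Suppose r ∈ A⊗A satisfies r13·r12 − r12·r23 + r23·r13 = 0 in the tensor-product algebra A⊗A⊗A. For each x ∈ A let P(x) ∈ A be the image of r under the linear map A⊗A → A induced by the bilinear map (a,b) ↦ a·x·b (so P(x) = Σᵢ aᵢ·x·bᵢ when r = Σᵢ aᵢ⊗bᵢ). Then P : A → A is a Rota-Baxter operator of weight zero, i.e. P(x)·P(y) = P(P(x)·y) + P(x·P(y)) for all x, y ∈ A. -/

import Mathlib

open TensorProduct

/-- `r ↦ r₁₂ = Σ aᵢ ⊗ bᵢ ⊗ 1` in `A ⊗ (A ⊗ A)`. -/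
noncomputable def e12 (k A : Type) [Field k] [Ring A] [Algebra k A] :
    A ⊗[k] A →ₗ[k] A ⊗[k] (A ⊗[k] A) :=
  TensorProduct.map LinearMap.id ((TensorProduct.mk k A A).flip 1)

/-- `r ↦ r₁₃ = Σ aᵢ ⊗ 1 ⊗ bᵢ` in `A ⊗ (A ⊗ A)`. -/
noncomputable def e13 (k A : Type) [Field k] [Ring A] [Algebra k A] :
    A ⊗[k] A →ₗ[k] A ⊗[k] (A ⊗[k] A) :=
  TensorProduct.map LinearMap.id (TensorProduct.mk k A A 1)

/-- `r ↦ r₂₃ = Σ 1 ⊗ aᵢ ⊗ bᵢ` in `A ⊗ (A ⊗ A)`. -/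
noncomputable def e23 (k A : Type) [Field k] [Ring A] [Algebra k A] :
    A ⊗[k] A →ₗ[k] A ⊗[k] (A ⊗[k] A) :=
  TensorProduct.mk k A (A ⊗[k] A) 1

/-- The bilinear map `(a, b) ↦ a·x·b`. -/
noncomputable def sandwich (k : Type) {A : Type} [Field k] [Ring A] [Algebra k A] (x : A) :
    A →ₗ[k] A →ₗ[k] A :=
  LinearMap.mk₂ k (fun a b => a * x * b)
    (fun a₁ a₂ b => by simp [add_mul])
    (fun c a b => by simp [smul_mul_assoc])
    (fun a b₁ b₂ => by simp [mul_add])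
    (fun c a b => by simp [mul_smul_comm])

/-! Apply the linear map `a ⊗ b ⊗ c ↦ a·x·b·y·c` to the associative Yang–Baxter equation:
its three terms `r₁₃r₁₂`, `r₁₂r₂₃`, `r₂₃r₁₃` are sent to `P(P(x)·y)`, `P(x)·P(y)` and
`P(x·P(y))` respectively. -/

section

variable {k A : Type} [Field k] [Ring A] [Algebra k A]

@[simp]
lemma sandwich_apply (x a b : A) : sandwich k x a b = a * x * b :=
  rfl

lemma sandwich_add (x y : A) : sandwich k (x + y) = sandwich k x + sandwich k y := by
  ext a b
  simp [sandwich, mul_add, add_mul]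

lemma lift_sandwich_add (x y : A) (u : A ⊗[k] A) :
    TensorProduct.lift (sandwich k (x + y)) u =
      TensorProduct.lift (sandwich k x) u + TensorProduct.lift (sandwich k y) u := by
  rw [sandwich_add]
  exact LinearMap.congr_fun (map_add (TensorProduct.lift.equiv (RingHom.id k) A A A) _ _) u

noncomputable def doubleSandwich (x y : A) : A ⊗[k] (A ⊗[k] A) →ₗ[k] A :=
  TensorProduct.lift (sandwich k x) ∘ₗ
    TensorProduct.map LinearMap.id (TensorProduct.lift (sandwich k y))

@[simp]
lemma doubleSandwich_tmul (x y a b c : A) :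
    doubleSandwich (k := k) x y (a ⊗ₜ (b ⊗ₜ c)) = a * x * (b * y * c) :=
  rfl

lemma doubleSandwich_e13_mul_e12 (x y : A) (u v : A ⊗[k] A) :
    doubleSandwich x y (e13 k A u * e12 k A v) =
      TensorProduct.lift (sandwich k (TensorProduct.lift (sandwich k x) v * y)) u := by
  induction u using TensorProduct.induction_on with
  | zero => simp
  | add u u' hu hu' => simp only [map_add, add_mul, hu, hu']
  | tmul a b =>
    induction v using TensorProduct.induction_on with
    | zero => simp
    | add v v' hv hv' => simp only [map_add, mul_add, add_mul, lift_sandwich_add, hv, hv']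
    | tmul c d => simp [e12, e13, mul_assoc]

lemma doubleSandwich_e12_mul_e23 (x y : A) (u v : A ⊗[k] A) :
    doubleSandwich x y (e12 k A u * e23 k A v) =
      TensorProduct.lift (sandwich k x) u * TensorProduct.lift (sandwich k y) v := by
  induction u using TensorProduct.induction_on with
  | zero => simp
  | add u u' hu hu' => simp only [map_add, add_mul, hu, hu']
  | tmul a b =>
    induction v using TensorProduct.induction_on with
    | zero => simp
    | add v v' hv hv' => simp only [map_add, mul_add, hv, hv']
    | tmul c d => simp [e12, e23, mul_assoc]

lemma doubleSandwich_e23_mul_e13 (x y : A) (u v : A ⊗[k] A) :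
    doubleSandwich x y (e23 k A u * e13 k A v) =
      TensorProduct.lift (sandwich k (x * TensorProduct.lift (sandwich k y) u)) v := by
  induction v using TensorProduct.induction_on with
  | zero => simp
  | add v v' hv hv' => simp only [map_add, mul_add, hv, hv']
  | tmul c d =>
    induction u using TensorProduct.induction_on with
    | zero => simp
    | add u u' hu hu' => simp only [map_add, add_mul, mul_add, lift_sandwich_add, hu, hu']
    | tmul a b => simp [e23, e13, mul_assoc]

end

theorem stmt0 {k A : Type} [Field k] [Ring A] [Algebra k A] (r : A ⊗[k] A)
    (haybe : e13 k A r * e12 k A r - e12 k A r * e23 k A r + e23 k A r * e13 k A r = 0) :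
    ∀ x y : A,
      TensorProduct.lift (sandwich k x) r * TensorProduct.lift (sandwich k y) r =
        TensorProduct.lift (sandwich k (TensorProduct.lift (sandwich k x) r * y)) r +
          TensorProduct.lift (sandwich k (x * TensorProduct.lift (sandwich k y) r)) r := by
  intro x y
  have h := congrArg (doubleSandwich x y) haybe
  rw [map_add, map_sub, map_zero, doubleSandwich_e13_mul_e12, doubleSandwich_e12_mul_e23,
    doubleSandwich_e23_mul_e13, sub_add_eq_add_sub, sub_eq_zero] at h
  exact h.symm
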